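/- arXiv:1912.06012 — 3 statements merged into one kernel-verified Lean document; each statement's English description precedes it below -/
import Mathlib

section
/- Let (T_n) be any quantities satisfying: for a continuous nonneg function sequence Φ_n : [0,1] → ℝ with Φ_n(0)=0, Φ_n(t) ≤ ∫₀ᵗ (c/2 + m·Φ_n(s))/(1 - ms - Σ²·Φ_n(s)) ds holds whenever 1 - mt - Σ²·Φ_n(t) ≥ 0, where c ≥ 0, m ∈ (0,1], Σ² > 0. Let f be the explicit solution f(t) = ((1-mt) - √((1-mt)² - Σ²ct))/Σ² on [0, t_max], t_max the smallest positive root of (1-mt)² = Σ²ct, t_max ≤ 1. Then Φ_n(t) ≤ f(t) for all t ∈ [0, t_max]. -/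
open Set Filter Topology MeasureTheory

/-!
For `t < t_max` and small `δ > 0`, the solution `f_{c+δ}` of the equation with `c` replaced by
`c + δ`, shifted in time to `s ↦ f_{c+δ}(s + δ)`, is a barrier for `Φ`: it is positive at `0`,
and since the rate `(c/2 + m x)/(1 - m s - Σ² x)` increases with `c`, with `s` and with `x`, it
is a supersolution of the equation for `c`. At a first contact time `t₁` the subsolution property
would give `Φ(t₁) ≤ ∫₀^{t₁} rate(s, Φ s) ds ≤ barrier(t₁) - barrier(0) < barrier(t₁)`, so there
is none. Letting `δ → 0` gives `Φ ≤ f` on `[0, t_max)`, and continuity extends it to `t_max`.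
-/

theorem lt_on_Icc_of_first_contact {u v : ℝ → ℝ} {a b : ℝ}
    (hu : ContinuousOn u (Icc a b)) (hv : ContinuousOn v (Icc a b)) (ha : u a < v a)
    (hcontact : ∀ t ∈ Ioc a b, (∀ s ∈ Icc a t, u s ≤ v s) → u t < v t) :
    ∀ t ∈ Icc a b, u t < v t := by
  by_contra! hex
  set C := {t ∈ Icc a b | v t ≤ u t}
  have hCbdd : BddBelow C := ⟨a, fun t ht => ht.1.1⟩
  obtain ⟨⟨ha₁, hb₁⟩, hvu⟩ : sInf C ∈ C :=
    (isClosed_Icc.isClosed_le hv hu).csInf_mem hex hCbdd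
  have hlt : a < sInf C := ha₁.lt_of_ne fun h => (h ▸ hvu).not_gt ha
  have hbefore : ∀ s ∈ Ico a (sInf C), u s ≤ v s := fun s hs =>
    le_of_not_ge fun h => hs.2.not_ge (csInf_le hCbdd ⟨⟨hs.1, hs.2.le.trans hb₁⟩, h⟩)
  have hupto : ∀ s ∈ Icc a (sInf C), u s ≤ v s := by
    have hmono : Icc a (sInf C) ⊆ Icc a b := Icc_subset_Icc_right hb₁
    rw [← closure_Ico hlt.ne] at hmono ⊢
    exact le_on_closure hbefore (hu.mono hmono) (hv.mono hmono)
  exact (hcontact _ ⟨hlt, hb₁⟩ hupto).not_ge hvu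

theorem lt_on_Icc_of_integral_subsolution {Φ B B' h : ℝ → ℝ} {a b : ℝ}
    (hΦ : ContinuousOn Φ (Icc a b)) (hB : ContinuousOn B (Icc a b))
    (hB' : ∀ s ∈ Ioo a b, HasDerivWithinAt B (B' s) (Ioi s) s) (ha : Φ a < B a)
    (hint : ∀ t ∈ Ioc a b, (∀ s ∈ Icc a t, Φ s ≤ B s) → IntegrableOn h (Icc a t))
    (hsub : ∀ t ∈ Ioc a b, Φ t ≤ B t → Φ t ≤ Φ a + ∫ s in a..t, h s)
    (hle : ∀ s ∈ Ioo a b, Φ s ≤ B s → h s ≤ B' s) :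
    ∀ t ∈ Icc a b, Φ t < B t := by
  refine lt_on_Icc_of_first_contact hΦ hB ha fun t ht hΦB => ?_
  have hIoo : Ioo a t ⊆ Ioo a b := Ioo_subset_Ioo_right ht.2
  calc Φ t ≤ Φ a + ∫ s in a..t, h s := hsub t ht (hΦB t (right_mem_Icc.2 ht.1.le))
    _ ≤ Φ a + (B t - B a) := by
      gcongr
      exact intervalIntegral.integral_le_sub_of_hasDeriv_right_of_le ht.1.le
        (hB.mono (Icc_subset_Icc_right ht.2)) (fun s hs => hB' s (hIoo hs)) (hint t ht hΦB)
        (fun s hs => hle s (hIoo hs) (hΦB s (Ioo_subset_Icc_self hs)))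
    _ < B t := by linarith

noncomputable section FluxEquation

variable (m c Sig2 : ℝ)

def fluxDiscr (s : ℝ) : ℝ := (1 - m * s) ^ 2 - Sig2 * c * s

def fluxSol (s : ℝ) : ℝ := ((1 - m * s) - √(fluxDiscr m c Sig2 s)) / Sig2

def fluxRate (s x : ℝ) : ℝ := (c / 2 + m * x) / (1 - m * s - Sig2 * x)

structure IsFluxSubsolution (Φ : ℝ → ℝ) : Prop where
  continuousOn : ContinuousOn Φ (Icc 0 1)
  nonneg : ∀ t ∈ Icc (0 : ℝ) 1, 0 ≤ Φ t
  map_zero : Φ 0 = 0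
  le_integral : ∀ t ∈ Icc (0 : ℝ) 1, 0 ≤ 1 - m * t - Sig2 * Φ t →
    Φ t ≤ ∫ s in (0 : ℝ)..t, fluxRate m c Sig2 s (Φ s)

variable {m c Sig2}

theorem fluxDiscr_le_of_le {s t : ℝ} (hm : 0 ≤ m) (hSc : 0 ≤ Sig2 * c) (hst : s ≤ t)
    (ht : m * t ≤ 1) : fluxDiscr m c Sig2 t ≤ fluxDiscr m c Sig2 s := by
  have hms : m * s ≤ m * t := mul_le_mul_of_nonneg_left hst hm
  unfold fluxDiscr
  nlinarith [mul_nonneg (mul_nonneg (sub_nonneg.2 hst) hm) (by linarith : 0 ≤ 2 - m * t - m * s),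
    mul_nonneg hSc (sub_nonneg.2 hst)]

theorem fluxDiscr_pos_of_lt {tmax s : ℝ}
    (hmin : ∀ s : ℝ, 0 < s → s < tmax → (1 - m * s) ^ 2 ≠ Sig2 * c * s)
    (hs0 : 0 ≤ s) (hs : s < tmax) : 0 < fluxDiscr m c Sig2 s := by
  by_contra! hneg
  have hcont : ContinuousOn (fluxDiscr m c Sig2) (Icc 0 s) := by unfold fluxDiscr; fun_prop
  obtain ⟨z, hz, hz0⟩ := intermediate_value_Icc' hs0 hcont
    ⟨hneg, by simp [fluxDiscr]⟩
  have hzpos : 0 < z := hz.1.lt_of_ne (by rintro rfl; simp [fluxDiscr] at hz0)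
  exact hmin z hzpos (hz.2.trans_lt hs) (sub_eq_zero.1 hz0)

theorem one_sub_sub_mul_fluxSol (hS : Sig2 ≠ 0) (s : ℝ) :
    1 - m * s - Sig2 * fluxSol m c Sig2 s = √(fluxDiscr m c Sig2 s) := by
  unfold fluxSol
  field_simp
  ring

theorem continuous_fluxSol : Continuous (fluxSol m c Sig2) := by
  unfold fluxSol fluxDiscr
  fun_prop

theorem hasDerivAt_fluxSol (hS : Sig2 ≠ 0) {s : ℝ} (hq : 0 < fluxDiscr m c Sig2 s) :
    HasDerivAt (fluxSol m c Sig2) (fluxRate m c Sig2 s (fluxSol m c Sig2 s)) s := by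
  have hlin : HasDerivAt (fun r : ℝ => 1 - m * r) (-m) s := by
    simpa using ((hasDerivAt_id s).const_mul m).const_sub 1
  have hdisc : HasDerivAt (fluxDiscr m c Sig2) (2 * (1 - m * s) * (-m) - Sig2 * c) s := by
    have := (hlin.pow 2).sub ((hasDerivAt_id s).const_mul (Sig2 * c))
    exact this.congr_deriv (by simp)
  have hsol := (hlin.sub (hdisc.sqrt hq.ne')).div_const Sig2
  refine hsol.congr_deriv ?_
  rw [fluxRate, one_sub_sub_mul_fluxSol hS]
  unfold fluxSol
  field_simp
  ring

theorem fluxSol_pos (hS : 0 < Sig2) (hc : 0 < c) {s : ℝ} (hs : 0 < s) (hms : 0 < 1 - m * s) :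
    0 < fluxSol m c Sig2 s := by
  have hsqrt : √(fluxDiscr m c Sig2 s) < 1 - m * s :=
    (Real.sqrt_lt' hms).2 (by unfold fluxDiscr; nlinarith [mul_pos (mul_pos hS hc) hs])
  exact div_pos (by linarith) hS

theorem fluxRate_le_fluxRate {c' s s' x y : ℝ} (hm : 0 ≤ m) (hS : 0 ≤ Sig2) (hc : 0 ≤ c)
    (hcc : c ≤ c') (hss : s ≤ s') (hx : 0 ≤ x) (hxy : x ≤ y)
    (hpos : 0 < 1 - m * s' - Sig2 * y) : fluxRate m c Sig2 s x ≤ fluxRate m c' Sig2 s' y := by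
  unfold fluxRate
  apply div_le_div₀ (by nlinarith) (by nlinarith) hpos
  nlinarith [mul_le_mul_of_nonneg_left hss hm, mul_le_mul_of_nonneg_left hxy hS]

theorem lt_fluxSol_add {Φ : ℝ → ℝ} {t t' δ : ℝ} (hm : 0 ≤ m) (hm1 : m ≤ 1) (hc : 0 ≤ c)
    (hS : 0 < Sig2) (hΦ : IsFluxSubsolution m c Sig2 Φ) (ht0 : 0 ≤ t) (hδ : 0 < δ)
    (hδt : t + δ ≤ t') (ht' : t' < 1) (hq : Sig2 * δ < fluxDiscr m c Sig2 t') :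
    Φ t < fluxSol m (c + δ) Sig2 (t + δ) := by
  have hdisc : ∀ s ∈ Icc 0 t, 0 < fluxDiscr m (c + δ) Sig2 (s + δ) := by
    intro s hs
    have hmono := fluxDiscr_le_of_le (c := c) (Sig2 := Sig2) hm (mul_nonneg hS.le hc)
      (show s + δ ≤ t' by linarith [hs.2]) (by nlinarith)
    have hshift : fluxDiscr m (c + δ) Sig2 (s + δ) =
        fluxDiscr m c Sig2 (s + δ) - Sig2 * δ * (s + δ) := by
      unfold fluxDiscr; ring
    nlinarith [mul_le_mul_of_nonneg_left (show s + δ ≤ 1 by linarith [hs.2])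
      (mul_nonneg hS.le hδ.le)]
  have hden : ∀ s ∈ Icc 0 t, Φ s ≤ fluxSol m (c + δ) Sig2 (s + δ) →
      0 < 1 - m * s - Sig2 * Φ s := by
    intro s hs hle
    have hsqrt := one_sub_sub_mul_fluxSol (m := m) (c := c + δ) hS.ne' (s + δ)
    nlinarith [Real.sqrt_pos.2 (hdisc s hs), mul_le_mul_of_nonneg_left hle hS.le,
      mul_nonneg hm hδ.le]
  have hIcc : Icc 0 t ⊆ Icc 0 1 := Icc_subset_Icc_right (by linarith)
  have hstart : Φ 0 < fluxSol m (c + δ) Sig2 (0 + δ) := by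
    rw [hΦ.map_zero, zero_add]
    exact fluxSol_pos hS (by linarith) hδ (by nlinarith)
  refine lt_on_Icc_of_integral_subsolution (h := fun s => fluxRate m c Sig2 s (Φ s))
    (hΦ.continuousOn.mono hIcc) (continuous_fluxSol.comp (continuous_add_const δ)).continuousOn
    (fun s hs => ((hasDerivAt_fluxSol hS.ne'
      (hdisc s (Ioo_subset_Icc_self hs))).comp_add_const s δ).hasDerivWithinAt)
    hstart ?_ ?_ ?_ t ⟨ht0, le_rfl⟩
  · intro t₁ ht₁ hle
    have hΦ₁ : ContinuousOn Φ (Icc 0 t₁) :=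
      hΦ.continuousOn.mono ((Icc_subset_Icc_right ht₁.2).trans hIcc)
    unfold fluxRate
    exact ContinuousOn.integrableOn_Icc <|
      (continuousOn_const.add (continuousOn_const.mul hΦ₁)).div
        ((continuousOn_const.sub (continuousOn_const.mul continuousOn_id)).sub
          (continuousOn_const.mul hΦ₁))
        fun s hs => (hden s ⟨hs.1, hs.2.trans ht₁.2⟩ (hle s hs)).ne'
  · intro t₁ ht₁ hle
    rw [hΦ.map_zero, zero_add]
    exact hΦ.le_integral t₁ (hIcc ⟨ht₁.1.le, ht₁.2⟩) (hden t₁ ⟨ht₁.1.le, ht₁.2⟩ hle).le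
  · intro s hs hle
    have hs' : s ∈ Icc 0 t := Ioo_subset_Icc_self hs
    refine fluxRate_le_fluxRate hm hS.le hc (by linarith) (by linarith)
      (hΦ.nonneg s (hIcc hs')) hle ?_
    rw [one_sub_sub_mul_fluxSol hS.ne']
    exact Real.sqrt_pos.2 (hdisc s hs')

theorem le_fluxSol {Φ : ℝ → ℝ} {t t' : ℝ} (hm : 0 ≤ m) (hm1 : m ≤ 1) (hc : 0 ≤ c)
    (hS : 0 < Sig2) (hΦ : IsFluxSubsolution m c Sig2 Φ) (ht0 : 0 ≤ t) (htt' : t < t')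
    (ht' : t' < 1) (hq : 0 < fluxDiscr m c Sig2 t') : Φ t ≤ fluxSol m c Sig2 t := by
  have hlim : Tendsto (fun δ => fluxSol m (c + δ) Sig2 (t + δ)) (𝓝[>] 0)
      (𝓝 (fluxSol m c Sig2 t)) := by
    have hcont : Continuous fun δ => fluxSol m (c + δ) Sig2 (t + δ) := by
      unfold fluxSol fluxDiscr; fun_prop
    simpa using (hcont.tendsto 0).mono_left nhdsWithin_le_nhds
  refine ge_of_tendsto hlim ?_
  filter_upwards [Ioo_mem_nhdsGT (lt_min (sub_pos.2 htt') (div_pos hq hS))] with δ hδ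
  refine (lt_fluxSol_add hm hm1 hc hS hΦ ht0 hδ.1 ?_ ht' ?_).le
  · linarith [hδ.2.trans_le (min_le_left _ _)]
  · rw [mul_comm, ← lt_div_iff₀ hS]
    exact hδ.2.trans_le (min_le_right _ _)

end FluxEquation

theorem stmt12_general (m c Sig2 tmax : ℝ) (hm0 : 0 < m) (hm1 : m ≤ 1) (hc : 0 ≤ c)
    (hS : 0 < Sig2) (htpos : 0 < tmax) (htle : tmax ≤ 1)
    (hmin : ∀ s : ℝ, 0 < s → s < tmax → (1 - m * s) ^ 2 ≠ Sig2 * c * s)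
    (f : ℝ → ℝ)
    (hf : ∀ t, f t = ((1 - m * t) - Real.sqrt ((1 - m * t) ^ 2 - Sig2 * c * t)) / Sig2)
    (Φ : ℝ → ℝ) (hcont : ContinuousOn Φ (Set.Icc 0 1))
    (hnn : ∀ t ∈ Set.Icc (0 : ℝ) 1, 0 ≤ Φ t)
    (h0 : Φ 0 = 0)
    (hsub : ∀ t ∈ Set.Icc (0 : ℝ) 1, 0 ≤ 1 - m * t - Sig2 * Φ t →
      Φ t ≤ ∫ s in (0 : ℝ)..t, (c / 2 + m * Φ s) / (1 - m * s - Sig2 * Φ s)) :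
    ∀ t ∈ Set.Icc (0 : ℝ) tmax, Φ t ≤ f t := by
  have hΦ : IsFluxSubsolution m c Sig2 Φ := ⟨hcont, hnn, h0, hsub⟩
  have hf' : f = fluxSol m c Sig2 := funext hf
  have hbelow : ∀ t ∈ Ico 0 tmax, Φ t ≤ f t := by
    rintro t ⟨ht0, ht⟩
    rw [hf']
    exact le_fluxSol hm0.le hm1 hc hS hΦ ht0 (t' := (t + tmax) / 2) (by linarith) (by linarith)
      (fluxDiscr_pos_of_lt hmin (by linarith) (by linarith))
  have hclosure : closure (Ico 0 tmax) = Icc 0 tmax := closure_Ico htpos.ne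
  rw [← hclosure]
  refine le_on_closure hbelow ?_ ?_
  · rw [hclosure]
    exact hcont.mono (Icc_subset_Icc_right htle)
  · rw [hf']
    exact continuous_fluxSol.continuousOn

/-- a continuous nonnegative subsolution `Φ` of the flux integral
equation stays below the explicit solution `f` on `[0, t_max]`. -/
theorem stmt12 (m c Sig2 tmax : ℝ) (hm0 : 0 < m) (hm1 : m ≤ 1) (hc : 0 ≤ c)
    (hS : 0 < Sig2) (htpos : 0 < tmax) (htle : tmax ≤ 1)
    (hroot : (1 - m * tmax) ^ 2 = Sig2 * c * tmax)
    (hmin : ∀ s : ℝ, 0 < s → s < tmax → (1 - m * s) ^ 2 ≠ Sig2 * c * s)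
    (f : ℝ → ℝ)
    (hf : ∀ t, f t = ((1 - m * t) - Real.sqrt ((1 - m * t) ^ 2 - Sig2 * c * t)) / Sig2)
    (Φ : ℝ → ℝ) (hcont : ContinuousOn Φ (Set.Icc 0 1))
    (hnn : ∀ t ∈ Set.Icc (0 : ℝ) 1, 0 ≤ Φ t)
    (h0 : Φ 0 = 0)
    (hsub : ∀ t ∈ Set.Icc (0 : ℝ) 1, 0 ≤ 1 - m * t - Sig2 * Φ t →
      Φ t ≤ ∫ s in (0 : ℝ)..t, (c / 2 + m * Φ s) / (1 - m * s - Sig2 * Φ s)) :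
    ∀ t ∈ Set.Icc (0 : ℝ) tmax, Φ t ≤ f t :=
  stmt12_general m c Sig2 tmax hm0 hm1 hc hS htpos htle hmin f hf Φ hcont hnn h0 hsub
end

section
/- The parking flux is monotone: if ℓ ≤ ℓ' pointwise on a finite rooted plane tree t, then φ(t, ℓ) ≤ φ(t, ℓ'), and the set of occupied vertices after parking with ℓ is contained in the set of occupied vertices after parking with ℓ'. Moreover φ(t, ℓ') - φ(t, ℓ) ≤ Σ_x (ℓ'(x) - ℓ(x)). -/
/-- A finite rooted tree: every vertex reaches the root by iterating `parent`, and the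
root is its own parent. -/
structure ParkingTree (V : Type) where
  root : V
  parent : V → V
  parent_root : parent root = root
  reaches_root : ∀ v, ∃ n, parent^[n] v = root

open Classical in
/-- Park one car arriving at `v`: it drives rootward (along iterated parents) to the
first unoccupied vertex; if all vertices on its path are occupied it exits through the
root, contributing `1` to the flux. Returns the new occupied set and the flux. -/
noncomputable def parkOne {V : Type} [DecidableEq V] (T : ParkingTree V)
    (occ : Finset V) (v : V) : Finset V × ℕ :=
  if h : ∃ k, T.parent^[k] v ∉ occ
  then (insert (T.parent^[Nat.find h] v) occ, 0)
  else (occ, 1)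

/-- Park a list of cars (given by their arrival vertices) sequentially; returns the
final occupied set and the total outgoing flux. -/
noncomputable def parkList {V : Type} [DecidableEq V] (T : ParkingTree V) :
    List V → Finset V → Finset V × ℕ
  | [], occ => (occ, 0)
  | v :: l, occ =>
      let r := parkOne T occ v
      let s := parkList T l r.1
      (s.1, r.2 + s.2)

open Classical

section Aux
variable {V : Type} [DecidableEq V] (T : ParkingTree V)

lemma parkOne_subset (occ : Finset V) (v : V) : occ ⊆ (parkOne T occ v).1 := by
  unfold parkOne
  split_ifs with h
  · exact Finset.subset_insert _ _
  · exact subset_rfl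

lemma parkOne_flux_le (occ : Finset V) (v : V) : (parkOne T occ v).2 ≤ 1 := by
  unfold parkOne; split_ifs <;> simp

lemma parkList_cons (v : V) (l : List V) (occ : Finset V) :
    parkList T (v :: l) occ =
      ((parkList T l (parkOne T occ v).1).1,
       (parkOne T occ v).2 + (parkList T l (parkOne T occ v).1).2) := rfl

lemma parkList_subset (l : List V) (occ : Finset V) : occ ⊆ (parkList T l occ).1 := by
  induction l generalizing occ with
  | nil => exact subset_rfl
  | cons v l ih =>
      rw [parkList_cons]
      exact (parkOne_subset T occ v).trans (ih _)

lemma parkList_flux_le (l : List V) (occ : Finset V) :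
    (parkList T l occ).2 ≤ l.length := by
  induction l generalizing occ with
  | nil => simp [parkList]
  | cons v l ih =>
      rw [parkList_cons]
      simp only [List.length_cons]
      have := parkOne_flux_le T occ v
      have := ih (parkOne T occ v).1
      omega

lemma parkList_append (l₁ l₂ : List V) (occ : Finset V) :
    parkList T (l₁ ++ l₂) occ =
      ((parkList T l₂ (parkList T l₁ occ).1).1,
       (parkList T l₁ occ).2 + (parkList T l₂ (parkList T l₁ occ).1).2) := by
  induction l₁ generalizing occ with
  | nil => simp [parkList]
  | cons v l ih =>
      rw [List.cons_append, parkList_cons, parkList_cons, ih]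
      simp [Nat.add_assoc]

omit [DecidableEq V] in
lemma no_spot_mono {occ occ' : Finset V} (hsub : occ ⊆ occ') {v : V}
    (h : ¬ ∃ k, T.parent^[k] v ∉ occ) : ¬ ∃ k, T.parent^[k] v ∉ occ' := by
  push_neg at h ⊢
  exact fun k => hsub (h k)

lemma park_from_spot {occ : Finset V} {u a : V}
    (h : ∃ k, T.parent^[k] u ∉ occ) (ha : T.parent^[Nat.find h] u = a) :
    parkOne T (insert a occ) u =
      if h2 : ∃ m, T.parent^[m+1] a ∉ insert a occ
      then (insert (T.parent^[Nat.find h2 + 1] a) (insert a occ), 0)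
      else (insert a occ, 1) := by
  set j := Nat.find h with hj
  have hiter : ∀ m : ℕ, T.parent^[m + 1 + j] u = T.parent^[m+1] a := by
    intro m
    rw [Function.iterate_add_apply, ha]
  have hle : ∀ i ≤ j, T.parent^[i] u ∈ insert a occ := by
    intro i hi
    rcases eq_or_lt_of_le hi with rfl | hlt
    · rw [ha]; exact Finset.mem_insert_self _ _
    · refine Finset.mem_insert_of_mem ?_
      have := Nat.find_min h hlt
      simpa using this
  have hequiv : (∃ k, T.parent^[k] u ∉ insert a occ) ↔
      (∃ m, T.parent^[m+1] a ∉ insert a occ) := by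
    constructor
    · rintro ⟨k, hk⟩
      have hk' : j < k := by
        by_contra hc
        push_neg at hc
        exact hk (hle k hc)
      refine ⟨k - j - 1, ?_⟩
      have he : (k - j - 1) + 1 + j = k := by omega
      rw [← hiter, he]
      exact hk
    · rintro ⟨m, hm⟩
      exact ⟨m + 1 + j, by rw [hiter]; exact hm⟩
  rw [parkOne]
  by_cases h2 : ∃ m, T.parent^[m+1] a ∉ insert a occ
  · have h1 : ∃ k, T.parent^[k] u ∉ insert a occ := hequiv.mpr h2
    rw [dif_pos h1, dif_pos h2]
    have hfind : Nat.find h1 = Nat.find h2 + 1 + j := by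
      rw [Nat.find_eq_iff]
      constructor
      · rw [hiter]; exact Nat.find_spec h2
      · intro i hi hcon
        rcases le_or_gt i j with hij | hij
        · exact hcon (hle i hij)
        · have hm : i - j - 1 < Nat.find h2 := by omega
          have hmin := Nat.find_min h2 hm
          apply hmin
          have he : (i - j - 1) + 1 + j = i := by omega
          rw [← he] at hcon
          rw [← hiter]
          exact hcon

    rw [hfind, hiter]
  · rw [dif_neg (fun hc => h2 (hequiv.mp hc)), dif_neg h2]

lemma spot_insert_other {occ : Finset V} {w a : V} (h : ∃ k, T.parent^[k] w ∉ occ)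
    (hne : a ≠ T.parent^[Nat.find h] w) :
    parkOne T (insert a occ) w = (insert (T.parent^[Nat.find h] w) (insert a occ), 0) := by
  have hb : T.parent^[Nat.find h] w ∉ insert a occ := by
    simp only [Finset.mem_insert, not_or]
    exact ⟨fun e => hne e.symm, Nat.find_spec h⟩
  have h' : ∃ k, T.parent^[k] w ∉ insert a occ := ⟨Nat.find h, hb⟩
  rw [parkOne, dif_pos h']
  have hfind : Nat.find h' = Nat.find h := by
    refine le_antisymm (Nat.find_le hb) (Nat.find_le ?_)
    intro hmem
    exact Nat.find_spec h' (Finset.mem_insert_of_mem hmem)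
  rw [hfind]

lemma parkOne_swap (occ : Finset V) (x y : V) :
    ((parkOne T (parkOne T occ x).1 y).1,
      (parkOne T occ x).2 + (parkOne T (parkOne T occ x).1 y).2)
  = ((parkOne T (parkOne T occ y).1 x).1,
      (parkOne T occ y).2 + (parkOne T (parkOne T occ y).1 x).2) := by
  by_cases hx : ∃ k, T.parent^[k] x ∉ occ
  · by_cases hy : ∃ k, T.parent^[k] y ∉ occ
    · have hxp : parkOne T occ x = (insert (T.parent^[Nat.find hx] x) occ, 0) := by
        rw [parkOne, dif_pos hx]
      have hyp : parkOne T occ y = (insert (T.parent^[Nat.find hy] y) occ, 0) := by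
        rw [parkOne, dif_pos hy]
      by_cases hab : T.parent^[Nat.find hx] x = T.parent^[Nat.find hy] y
      · have h1 := park_from_spot T hx rfl
        have h2 := park_from_spot T hy rfl
        rw [hxp, hyp, hab] at *
        rw [h1, h2]
      · have h1 : parkOne T (insert (T.parent^[Nat.find hx] x) occ) y
            = (insert (T.parent^[Nat.find hy] y)
                (insert (T.parent^[Nat.find hx] x) occ), 0) :=
          spot_insert_other T hy hab
        have h2 : parkOne T (insert (T.parent^[Nat.find hy] y) occ) x
            = (insert (T.parent^[Nat.find hx] x)
                (insert (T.parent^[Nat.find hy] y) occ), 0) :=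
          spot_insert_other T hx (fun e => hab e.symm)
        rw [hxp, hyp, h1, h2, Finset.insert_comm]
    · have hyp : parkOne T occ y = (occ, 1) := by rw [parkOne, dif_neg hy]
      have hy2 : parkOne T (parkOne T occ x).1 y = ((parkOne T occ x).1, 1) := by
        rw [parkOne, dif_neg (no_spot_mono T (parkOne_subset T occ x) hy)]
      rw [hyp, hy2]
      simp [Nat.add_comm]
  · have hxp : parkOne T occ x = (occ, 1) := by rw [parkOne, dif_neg hx]
    have hx2 : parkOne T (parkOne T occ y).1 x = ((parkOne T occ y).1, 1) := by
      rw [parkOne, dif_neg (no_spot_mono T (parkOne_subset T occ y) hx)]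
    rw [hxp, hx2]
    simp [Nat.add_comm]

lemma parkList_perm {l l' : List V} (hp : l.Perm l') :
    ∀ occ : Finset V, parkList T l occ = parkList T l' occ := by
  induction hp with
  | nil => intro occ; rfl
  | cons v _ ih =>
      intro occ
      rw [parkList_cons, parkList_cons, ih]
  | swap x y l =>
      intro occ
      rw [parkList_cons, parkList_cons, parkList_cons, parkList_cons]
      have h := parkOne_swap T occ y x
      have hset := congrArg Prod.fst h
      have hflux := congrArg Prod.snd h
      simp only at hset hflux
      rw [Prod.mk.injEq]
      constructor
      · rw [hset]
      · rw [hset]; omega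
  | trans _ _ ih1 ih2 =>
      intro occ; rw [ih1, ih2]

lemma length_eq_sum_count [Fintype V] (e : List V) :
    e.length = ∑ v, e.count v := by
  induction e with
  | nil => simp
  | cons a e ih =>
      simp only [List.length_cons, List.count_cons, ih]
      rw [Finset.sum_add_distrib]
      simp

end Aux

/-- monotonicity of parking: if `ℓ ≤ ℓ\'` pointwise then the occupied set
and the flux for `ℓ` are dominated by those for `ℓ\'`, and the flux increase is at most
the number of extra cars. -/
theorem stmt16 {V : Type} [Fintype V] [DecidableEq V] (T : ParkingTree V)
    (ℓ ℓ' : V → ℕ) (hle : ∀ v, ℓ v ≤ ℓ' v) (l l' : List V)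
    (hl : ∀ v, l.count v = ℓ v) (hl' : ∀ v, l'.count v = ℓ' v) :
    (parkList T l ∅).1 ⊆ (parkList T l' ∅).1 ∧
    (parkList T l ∅).2 ≤ (parkList T l' ∅).2 ∧
    (parkList T l' ∅).2 ≤ (parkList T l ∅).2 + ∑ v, (ℓ' v - ℓ v) := by
  classical
  set e : List V := Finset.univ.toList.flatMap (fun v => List.replicate (ℓ' v - ℓ v) v)
    with he
  have hcount : ∀ a : V, e.count a = ℓ' a - ℓ a := by
    intro a
    rw [he, List.count_flatMap]
    have : (List.map (List.count a ∘ fun v => List.replicate (ℓ' v - ℓ v) v)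
        Finset.univ.toList).sum
        = ∑ v, (if v = a then ℓ' v - ℓ v else 0) := by
      rw [← Finset.sum_map_toList]
      congr 1
      apply List.map_congr_left
      intro v _
      simp [List.count_replicate]
    rw [this, Finset.sum_ite_eq' Finset.univ a (fun v => ℓ' v - ℓ v)]
    simp
  have hperm : l'.Perm (l ++ e) := by
    rw [List.perm_iff_count]
    intro a
    rw [List.count_append, hl', hl, hcount]
    have := hle a
    omega
  have hlen : e.length = ∑ v, (ℓ' v - ℓ v) := by
    rw [length_eq_sum_count]
    exact Finset.sum_congr rfl fun v _ => hcount v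
  have hmain := parkList_perm T hperm (∅ : Finset V)
  rw [hmain, parkList_append]
  refine ⟨parkList_subset T e _, Nat.le_add_right _ _, ?_⟩
  have := parkList_flux_le T e (parkList T l ∅).1
  omega
end

section
/- Suppose real random variables X_n ≥ 0 satisfy X_n/n → c > 0 in probability (supercritical flux), and Y_n ≥ 0 satisfy Y_n/n → m - p in probability where p = P(root occupied). If additionally (1/n)Σ of i.i.d. mean-m arrivals converges to m in probability and the conservation identity Σℓ - φ = #occupied holds, then: P(root of T occupied) = m - c < m iff φ(T_n)/n → c > 0. In particular, φ(T_n)/n → m - P(∅ occupied in T) in probability. -/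
open MeasureTheory Filter

/-! Writing `φ_n / n = A_n / n - O_n / n`, convergence in probability of `φ_n / n` to `m - p`
follows from stability of convergence in measure under subtraction, and the equivalence holds
because a sequence cannot converge in measure to two different constants under a nonzero
measure. -/

namespace MeasureTheory

variable {α ι E : Type*} {_ : MeasurableSpace α} {μ : Measure α} {l : Filter ι}

lemma tendstoInMeasure_iff_dist_lt [PseudoMetricSpace E] {f : ι → α → E} {g : α → E} :
    TendstoInMeasure μ f l g ↔
      ∀ ε, 0 < ε → Tendsto (fun i => μ {x | ε < dist (f i x) (g x)}) l (nhds 0) := by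
  rw [tendstoInMeasure_iff_dist]
  refine ⟨fun h ε hε => ?_, fun h ε hε => ?_⟩
  · refine tendsto_of_tendsto_of_tendsto_of_le_of_le tendsto_const_nhds (h ε hε)
      (fun _ => zero_le) fun _ => measure_mono fun _ (hx : ε < _) => hx.le
  · refine tendsto_of_tendsto_of_tendsto_of_le_of_le tendsto_const_nhds
      (h (ε / 2) (by positivity)) (fun _ => zero_le) fun _ => measure_mono fun _ hx => ?_
    exact (half_lt_self hε).trans_le (show ε ≤ _ from hx)

theorem TendstoInMeasure.sub [SeminormedAddCommGroup E] {f f' : ι → α → E} {g g' : α → E}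
    (hf : TendstoInMeasure μ f l g) (hf' : TendstoInMeasure μ f' l g') :
    TendstoInMeasure μ (fun i x => f i x - f' i x) l (fun x => g x - g' x) := by
  rw [tendstoInMeasure_iff_norm] at hf hf' ⊢
  intro ε hε
  have hsplit : ∀ i, {x | ε ≤ ‖f i x - f' i x - (g x - g' x)‖} ⊆
      {x | ε / 2 ≤ ‖f i x - g x‖} ∪ {x | ε / 2 ≤ ‖f' i x - g' x‖} := by
    intro i x (hx : ε ≤ _)
    by_contra hout
    simp only [Set.mem_union, Set.mem_ofPred_eq, not_or, not_le] at hout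
    have := norm_sub_le (f i x - g x) (f' i x - g' x)
    rw [sub_sub_sub_comm] at this
    linarith
  have hsum := (hf (ε / 2) (by positivity)).add (hf' (ε / 2) (by positivity))
  rw [add_zero] at hsum
  exact tendsto_of_tendsto_of_tendsto_of_le_of_le tendsto_const_nhds hsum (fun _ => zero_le)
    fun i => (measure_mono (hsplit i)).trans (measure_union_le _ _)

theorem TendstoInMeasure.const_unique [EMetricSpace E] [NeZero μ] [l.NeBot]
    [l.IsCountablyGenerated] {f : ι → α → E} {a b : E}
    (ha : TendstoInMeasure μ f l fun _ => a) (hb : TendstoInMeasure μ f l fun _ => b) :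
    a = b :=
  have : (ae μ).NeBot := ae_neBot.2 (NeZero.ne μ)
  (tendstoInMeasure_ae_unique ha hb).exists.choose_spec

end MeasureTheory

theorem stmt18_general {Ω : Type*} [MeasurableSpace Ω] (μ : Measure Ω) [IsProbabilityMeasure μ]
    (A O φ : ℕ → Ω → ℝ) (m p c : ℝ)
    (hφ : ∀ n ω, φ n ω = A n ω - O n ω)
    (hA : ∀ ε : ℝ, 0 < ε →
      Tendsto (fun n : ℕ => μ {ω | ε < |A n ω / n - m|}) atTop (nhds 0))
    (hO : ∀ ε : ℝ, 0 < ε →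
      Tendsto (fun n : ℕ => μ {ω | ε < |O n ω / n - p|}) atTop (nhds 0)) :
    (∀ ε : ℝ, 0 < ε →
      Tendsto (fun n : ℕ => μ {ω | ε < |φ n ω / n - (m - p)|}) atTop (nhds 0)) ∧
    (p = m - c ↔ ∀ ε : ℝ, 0 < ε →
      Tendsto (fun n : ℕ => μ {ω | ε < |φ n ω / n - c|}) atTop (nhds 0)) := by
  have hA' : TendstoInMeasure μ (fun n ω => A n ω / n) atTop fun _ => m :=
    tendstoInMeasure_iff_dist_lt.2 (by simpa only [Real.dist_eq] using hA)
  have hO' : TendstoInMeasure μ (fun n ω => O n ω / n) atTop fun _ => p :=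
    tendstoInMeasure_iff_dist_lt.2 (by simpa only [Real.dist_eq] using hO)
  have hflux : TendstoInMeasure μ (fun n ω => φ n ω / n) atTop fun _ => m - p := by
    simpa only [hφ, sub_div] using hA'.sub hO'
  have hflux_iff : ∀ a, TendstoInMeasure μ (fun n ω => φ n ω / n) atTop (fun _ => a) ↔
      ∀ ε : ℝ, 0 < ε →
        Tendsto (fun n : ℕ => μ {ω | ε < |φ n ω / n - a|}) atTop (nhds 0) := fun a => by
    simp only [tendstoInMeasure_iff_dist_lt, Real.dist_eq]
  refine ⟨(hflux_iff _).1 hflux, ⟨fun hp => ?_, fun hc => ?_⟩⟩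
  · rw [← hflux_iff]
    simpa only [hp, sub_sub_cancel] using hflux
  · linarith [hflux.const_unique ((hflux_iff c).2 hc)]

/-- law of large numbers for the flux via conservation of cars: if the
total arrivals satisfy `A_n/n → m` in probability, the number of occupied vertices
satisfies `O_n/n → p` in probability and `φ_n = A_n - O_n ≥ 0`, then
`φ_n/n → m - p` in probability; moreover `p = m - c` iff `φ_n/n → c` in probability. -/
theorem stmt18 {Ω : Type*} [MeasurableSpace Ω] (μ : Measure Ω) [IsProbabilityMeasure μ]
    (A O φ : ℕ → Ω → ℝ) (m p c : ℝ) (hc : 0 < c)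
    (hφ : ∀ n ω, φ n ω = A n ω - O n ω)
    (hφnn : ∀ n ω, 0 ≤ φ n ω)
    (hA : ∀ ε : ℝ, 0 < ε →
      Tendsto (fun n : ℕ => μ {ω | ε < |A n ω / n - m|}) atTop (nhds 0))
    (hO : ∀ ε : ℝ, 0 < ε →
      Tendsto (fun n : ℕ => μ {ω | ε < |O n ω / n - p|}) atTop (nhds 0)) :
    (∀ ε : ℝ, 0 < ε →
      Tendsto (fun n : ℕ => μ {ω | ε < |φ n ω / n - (m - p)|}) atTop (nhds 0)) ∧
    (p = m - c ↔ ∀ ε : ℝ, 0 < ε →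
      Tendsto (fun n : ℕ => μ {ω | ε < |φ n ω / n - c|}) atTop (nhds 0)) :=
  stmt18_general μ A O φ m p c hφ hA hO
end
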